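/- Let R₀ = [a₁,b₁]×[a₂,b₂] with a₁ < b₁ and a₂ < b₂, and let F ⊆ R₀ be a rectilinear polygon. Then P₁(F)/L²(F) ≥ P₁(R₀)/L²(R₀) = 2·((b₁−a₁)+(b₂−a₂))/((b₁−a₁)·(b₂−a₂)); that is, among rectilinear polygons contained in R₀, the ratio of ℓ¹-perimeter to area is minimized by R₀ itself. -/

import Mathlib

open MeasureTheory Filter Set
open scoped MeasureTheory ENNReal RealInnerProductSpace

noncomputable section

/-- The Euclidean plane ℝ². -/
abbrev E2 := EuclideanSpace ℝ (Fin 2)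

/-- Divergence of a vector field on ℝ². -/
def divg (η : E2 → E2) (x : E2) : ℝ :=
  fderiv ℝ η x (EuclideanSpace.single 0 1) 0 + fderiv ℝ η x (EuclideanSpace.single 1 1) 1

/-- The ℓ¹-anisotropic total variation of `u` on an (open) set `U`:
the supremum of `∫_U u · div η` over C¹ vector fields `η` compactly supported in `U`
with `max |η₁| |η₂| ≤ 1` everywhere. -/
def TV1 (U : Set E2) (u : E2 → ℝ) : ℝ≥0∞ :=
  ⨆ η : {η : E2 → E2 // ContDiff ℝ 1 η ∧ HasCompactSupport η ∧ tsupport η ⊆ U ∧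
      ∀ x, max |η x 0| |η x 1| ≤ 1},
    ENNReal.ofReal (∫ x in U, u x * divg η.1 x)

/-- Relative ℓ¹-anisotropic perimeter `P₁(E;U)`. -/
def P1 (E U : Set E2) : ℝ≥0∞ := TV1 U (Set.indicator E fun _ => 1)

/-- ℓ¹-anisotropic perimeter `P₁(E) = P₁(E;ℝ²)`. -/
def P1' (E : Set E2) : ℝ≥0∞ := P1 E Set.univ

/-- 1-dimensional Hausdorff measure on the plane. -/
def μH1 : Measure E2 := μH[1]

/-- The set `∂^{1/2} E` of points of density 1/2 of `E`. -/
def halfBoundary (E : Set E2) : Set E2 :=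
  {x | Tendsto (fun ρ : ℝ => volume (Metric.ball x ρ ∩ E) / volume (Metric.ball x ρ))
    (nhdsWithin 0 (Set.Ioi 0)) (nhds (1 / 2))}

/-- A grid: a finite family of vertical lines (abscissae `X`) and horizontal lines
(ordinates `Y`), with at least two lines in each direction. -/
structure Grid where
  X : Finset ℝ
  Y : Finset ℝ
  hX : 2 ≤ X.card
  hY : 2 ≤ Y.card

/-- `a` and `b` are consecutive elements of the finite set `S`. -/
def Consec (S : Finset ℝ) (a b : ℝ) : Prop :=
  a ∈ S ∧ b ∈ S ∧ a < b ∧ ∀ c ∈ S, ¬(a < c ∧ c < b)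

/-- The closed axis-parallel rectangle `[a,b] × [c,d]`. -/
def cellSet (a b c d : ℝ) : Set E2 := {x : E2 | x 0 ∈ Icc a b ∧ x 1 ∈ Icc c d}

/-- A cell of the grid `G`. -/
def Grid.IsCell (G : Grid) (R : Set E2) : Prop :=
  ∃ a b c d, Consec G.X a b ∧ Consec G.Y c d ∧ R = cellSet a b c d

/-- An edge of the grid `G`: a closed segment joining two adjacent grid vertices. -/
def Grid.IsEdge (G : Grid) (I : Set E2) : Prop :=
  (∃ a b y, Consec G.X a b ∧ y ∈ G.Y ∧ I = {x : E2 | x 0 ∈ Icc a b ∧ x 1 = y}) ∨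
  (∃ c d z, Consec G.Y c d ∧ z ∈ G.X ∧ I = {x : E2 | x 0 = z ∧ x 1 ∈ Icc c d})

/-- The union of the lines of the grid `G`. -/
def Grid.lines (G : Grid) : Set E2 := {x : E2 | (x 0 ∈ G.X) ∨ (x 1 ∈ G.Y)}

/-- A closed axis-parallel rectangle with nonempty interior. -/
def IsClosedRect (R : Set E2) : Prop :=
  ∃ a b c d : ℝ, a < b ∧ c < d ∧ R = cellSet a b c d

/-- A rectilinear polygon: a finite nonempty union of closed axis-parallel rectangles
with nonempty interior. -/
def IsRectPolygon (F : Set E2) : Prop :=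
  ∃ 𝒮 : Finset (Set E2), 𝒮.Nonempty ∧ (∀ R ∈ 𝒮, IsClosedRect R) ∧ F = ⋃ R ∈ 𝒮, R

/-- `F ∈ F(G)`: `F` is a (nonempty) union of cells of the grid `G`. -/
def SubordinateTo (G : Grid) (F : Set E2) : Prop :=
  ∃ 𝒮 : Finset (Set E2), 𝒮.Nonempty ∧ (∀ R ∈ 𝒮, G.IsCell R) ∧ F = ⋃ R ∈ 𝒮, R

/-- A signature `(Fp, Fm)` for (the boundary of) the set `F`. -/
def IsSignature (F Fp Fm : Set E2) : Prop :=
  Fp ⊆ frontier F ∧ Fm ⊆ frontier F ∧ μH1 (Fp ∩ Fm) = 0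

/-- A signature subordinate to the grid `G`: both parts are unions of two disjoint
families of edges of `G`. -/
def SigSubordinate (G : Grid) (Fp Fm : Set E2) : Prop :=
  ∃ Ip Im : Finset (Set E2), (∀ I ∈ Ip, G.IsEdge I) ∧ (∀ I ∈ Im, G.IsEdge I) ∧
    Disjoint Ip Im ∧ Fp = ⋃ I ∈ Ip, I ∧ Fm = ⋃ I ∈ Im, I

/-- `f` is a.e. constant on the set `S`. -/
def AEConstOn (f : E2 → ℝ) (S : Set E2) : Prop :=
  ∃ c : ℝ, ∀ᵐ x ∂(volume.restrict S), f x = c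

/-- The Cheeger-type functional `J_{F₀, ∂F₀⁺, ∂F₀⁻, f}`, with values in `EReal`. -/
def cheegerJ (F₀ Fp Fm : Set E2) (f : E2 → ℝ) (E : Set E2) : EReal :=
  if P1' E < ⊤ then
    ((((volume E).toReal⁻¹ * ((P1 E (interior F₀)).toReal
      + (μH1 (halfBoundary E ∩ Fp)).toReal - (μH1 (halfBoundary E ∩ Fm)).toReal
      - ∫ x in E, f x)) : ℝ) : EReal)
  else (⊤ : EReal)

/-- The Cheeger-type functional `J̌_{F₀, ∂F₀⁺, ∂F₀⁻, f}`, with values in `EReal`. -/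
def cheegerJcheck (F₀ Fp Fm : Set E2) (f : E2 → ℝ) (E : Set E2) : EReal :=
  if P1' E < ⊤ then
    ((((volume E).toReal⁻¹ * (-(P1 E (interior F₀)).toReal
      + (μH1 (halfBoundary E ∩ Fp)).toReal - (μH1 (halfBoundary E ∩ Fm)).toReal
      - ∫ x in E, f x)) : ℝ) : EReal)
  else (⊥ : EReal)

/-- `Q` is a partition of `Ω` into rectilinear polygons. -/
def IsPartitionOf (Ω : Set E2) (Q : Finset (Set E2)) : Prop :=
  (∀ F ∈ Q, IsRectPolygon F) ∧
  ((Q : Set (Set E2)).Pairwise fun F F' => Disjoint (interior F) (interior F')) ∧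
  (⋃ F ∈ Q, F) = Ω

/-- `Q` is a partition of `Ω` into rectilinear polygons on the interior of each of
which `u` is a.e. constant. -/
def PCRwitness (Ω : Set E2) (u : E2 → ℝ) (Q : Finset (Set E2)) : Prop :=
  IsPartitionOf Ω Q ∧ ∀ F ∈ Q, AEConstOn u (interior F)

/-- `u ∈ PCR(Ω)`: `u` is piecewise constant on a partition of `Ω` into rectilinear
polygons. -/
def PCROn (Ω : Set E2) (u : E2 → ℝ) : Prop := ∃ Q, PCRwitness Ω u Q

/-- `Q = Q(u)`: a coarsest (minimum cardinality) partition witnessing `u ∈ PCR(Ω)`. -/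
def IsCanonicalPartition (Ω : Set E2) (u : E2 → ℝ) (Q : Finset (Set E2)) : Prop :=
  PCRwitness Ω u Q ∧ ∀ Q' : Finset (Set E2), PCRwitness Ω u Q' → Q.card ≤ Q'.card

/-- `G = G(u)`: a smallest grid such that `Ω` and all members of a canonical partition
`Q(u)` are subordinate to `G`. -/
def IsCanonicalGrid (Ω : Set E2) (u : E2 → ℝ) (G : Grid) : Prop :=
  (SubordinateTo G Ω ∧ ∃ Q, IsCanonicalPartition Ω u Q ∧ ∀ F ∈ Q, SubordinateTo G F) ∧
  ∀ G' : Grid,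
    (SubordinateTo G' Ω ∧ ∃ Q, IsCanonicalPartition Ω u Q ∧ ∀ F ∈ Q, SubordinateTo G' F) →
    G.X ⊆ G'.X ∧ G.Y ⊆ G'.Y

/-- A consistent signature for the family `Q`, given by the two assignments
`Sp` (positive parts) and `Sm` (negative parts). -/
def IsConsistentSignature (Q : Finset (Set E2)) (Sp Sm : Set E2 → Set E2) : Prop :=
  (∀ F ∈ Q, IsSignature F (Sp F) (Sm F)) ∧
  ∀ F ∈ Q, ∀ F' ∈ Q, F ≠ F' →
    (∀ x ∈ Sp F, x ∈ F' → x ∈ Sm F') ∧ (∀ x ∈ Sm F, x ∈ F' → x ∈ Sp F')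

/-- `v ∈ -∂TV₁(u; U)`: the negative subdifferential of `TV₁(·;U)` on `L²(U)`. -/
def InNegSubdiffTV1 (U : Set E2) (u v : E2 → ℝ) : Prop :=
  MemLp u 2 (volume.restrict U) ∧ MemLp v 2 (volume.restrict U) ∧ TV1 U u < ⊤ ∧
  ∀ w : E2 → ℝ, MemLp w 2 (volume.restrict U) →
    ENNReal.ofReal ((TV1 U u).toReal - ∫ x in U, v x * (w x - u x)) ≤ TV1 U w

/-- The time interval `[0, T)` (with `T ∈ (0,∞]`) as a subset of `ℝ`. -/
def Ivl (T : ℝ≥0∞) : Set ℝ := {t : ℝ | 0 ≤ t ∧ (ENNReal.ofReal t) < T}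

/-- `u` (with pointwise derivative family `u'`) is a strong solution of the
ℓ¹-total variation flow on `U` on `[0,T)` with initial datum `u₀`:
`u : [0,T) → L²(U)` is continuous, `u(0) = u₀`, it is locally absolutely continuous
in time on `(0,T)` with derivative `u'`, and `u'(t) ∈ -∂TV₁(u(t);U)` for a.e. `t`. -/
def IsStrongSolutionTV1 (U : Set E2) (T : ℝ≥0∞) (u₀ : E2 → ℝ) (u u' : ℝ → E2 → ℝ) : Prop :=
  (∀ᵐ x ∂(volume.restrict U), u 0 x = u₀ x) ∧
  (∀ t ∈ Ivl T, MemLp (u t) 2 (volume.restrict U)) ∧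
  (∀ t ∈ Ivl T, Tendsto (fun s => eLpNorm (u s - u t) 2 (volume.restrict U))
      (nhdsWithin t (Ivl T)) (nhds 0)) ∧
  (∀ s ∈ Ivl T, ∀ t ∈ Ivl T, 0 < s → 0 < t →
      ∀ᵐ x ∂(volume.restrict U), u t x - u s x = ∫ r in s..t, u' r x) ∧
  (∀ᵐ t ∂(volume.restrict (Ivl T)), 0 < t → InNegSubdiffTV1 U (u t) (u' t))

/-- The ℓ¹-ROF functional `E_λ(u) = TV₁(u; int Ω) + (1/(2λ)) ∫_Ω (u-u₀)²`. -/
def ROF (lam : ℝ) (Ω : Set E2) (u₀ u : E2 → ℝ) : ℝ≥0∞ :=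
  TV1 (interior Ω) u +
    ENNReal.ofReal (2 * lam)⁻¹ * ∫⁻ x in Ω, ENNReal.ofReal ((u x - u₀ x) ^ 2)

/-- `u` minimizes the ℓ¹-ROF functional over `L²(Ω)`. -/
def MinimizesROF (lam : ℝ) (Ω : Set E2) (u₀ u : E2 → ℝ) : Prop :=
  MemLp u 2 (volume.restrict Ω) ∧
  ∀ v : E2 → ℝ, MemLp v 2 (volume.restrict Ω) → ROF lam Ω u₀ u ≤ ROF lam Ω u₀ v

/-- Two cells of `G` lying between the same two consecutive horizontal lines,
separated by at most `m` cells of `G`. -/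
def RowPair (G : Grid) (m : ℕ) (R₁ R₂ : Set E2) : Prop :=
  ∃ c d a₁ b₁ a₂ b₂, Consec G.Y c d ∧ Consec G.X a₁ b₁ ∧ Consec G.X a₂ b₂ ∧
    R₁ = cellSet a₁ b₁ c d ∧ R₂ = cellSet a₂ b₂ c d ∧
    (G.X.filter fun x => min b₁ b₂ ≤ x ∧ x ≤ max a₁ a₂).card ≤ m + 1

/-- Two cells of `G` lying between the same two consecutive vertical lines,
separated by at most `m` cells of `G`. -/
def ColPair (G : Grid) (m : ℕ) (R₁ R₂ : Set E2) : Prop :=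
  ∃ a b c₁ d₁ c₂ d₂, Consec G.X a b ∧ Consec G.Y c₁ d₁ ∧ Consec G.Y c₂ d₂ ∧
    R₁ = cellSet a b c₁ d₁ ∧ R₂ = cellSet a b c₂ d₂ ∧
    (G.Y.filter fun y => min d₁ d₂ ≤ y ∧ y ≤ max c₁ c₂).card ≤ m + 1

/-- The pair relation `R²_{i,m}(G)`: `i = true` for rows, `i = false` for columns. -/
def CellPair (G : Grid) (i : Bool) (m : ℕ) (R₁ R₂ : Set E2) : Prop :=
  if i then RowPair G m R₁ R₂ else ColPair G m R₁ R₂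

/-- A possibly-unbounded rectilinear polygon: either a rectilinear polygon or the
closure of the complement of a finite union of closed axis-parallel rectangles. -/
def IsGenRectPolygon (F : Set E2) : Prop :=
  IsRectPolygon F ∨
  ∃ 𝒮 : Finset (Set E2), (∀ R ∈ 𝒮, IsClosedRect R) ∧ F = closure ((⋃ R ∈ 𝒮, R)ᶜ)

/-- A possibly-unbounded rectilinear polygon is subordinate to `G` if its topological
boundary is contained in the union of the lines of `G`. -/
def GenSubordinate (G : Grid) (F : Set E2) : Prop := frontier F ⊆ G.lines

/-- A finite family of possibly-unbounded rectilinear polygons with pairwise disjoint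
interiors and union `ℝ²`, exactly one member being unbounded. -/
def IsGenPartition (Q : Finset (Set E2)) : Prop :=
  (∀ F ∈ Q, IsGenRectPolygon F) ∧
  ((Q : Set (Set E2)).Pairwise fun F F' => Disjoint (interior F) (interior F')) ∧
  (⋃ F ∈ Q, F) = Set.univ ∧
  (∃! F : Set E2, F ∈ Q ∧ ¬Bornology.IsBounded F)

/-- A witness that `u ∈ PCR₊(ℝ²)`: `u` is a.e. non-negative with essentially compact
support, a.e. constant on the interior of each member of `Q`. -/
def PCRplusWitness (u : E2 → ℝ) (Q : Finset (Set E2)) : Prop :=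
  (∀ᵐ x : E2 ∂volume, 0 ≤ u x) ∧
  (∃ K : Set E2, IsCompact K ∧ ∀ᵐ x : E2 ∂volume, x ∉ K → u x = 0) ∧
  IsGenPartition Q ∧ ∀ F ∈ Q, AEConstOn u (interior F)

/-- `u ∈ PCR₊(ℝ²)`. -/
def PCRplus (u : E2 → ℝ) : Prop := ∃ Q, PCRplusWitness u Q

/-- `Q = Q(u)` for `u ∈ PCR₊(ℝ²)`: a coarsest (minimum cardinality) witness. -/
def IsCanonicalGenPartition (u : E2 → ℝ) (Q : Finset (Set E2)) : Prop :=
  PCRplusWitness u Q ∧ ∀ Q' : Finset (Set E2), PCRplusWitness u Q' → Q.card ≤ Q'.card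

/-- `G = G(u)` for `u ∈ PCR₊(ℝ²)`. -/
def IsCanonicalGenGrid (u : E2 → ℝ) (G : Grid) : Prop :=
  (∃ Q, IsCanonicalGenPartition u Q ∧ ∀ F ∈ Q, GenSubordinate G F) ∧
  ∀ G' : Grid, (∃ Q, IsCanonicalGenPartition u Q ∧ ∀ F ∈ Q, GenSubordinate G' F) →
    G.X ⊆ G'.X ∧ G.Y ⊆ G'.Y

end

/-!
The upper bound `P₁(R₀) ≤ 2((b₁-a₁)+(b₂-a₂))` is the divergence theorem on `R₀`, applied to each
admissible field. For the lower bound, the affine field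
`η(x) = (2(x₁-m₁)/(b₁-a₁), 2(x₂-m₂)/(b₂-a₂))`, with `m` the centre of `R₀`, satisfies
`max(|η₁|,|η₂|) ≤ 1` on `R₀` and has constant divergence `κ = 2/(b₁-a₁) + 2/(b₂-a₂)`; scaled by any
`s < 1` it can be cut off to an admissible field, so `P₁(E) ≥ κ L²(E)` for every `E ⊆ R₀`.
Taking `E = R₀` gives `P₁(R₀) = κ L²(R₀)`, and taking `E = F` gives the inequality of ratios once
`P₁(F) < ∞`, which follows from inclusion–exclusion over the rectangles making up `F`:
rectangles are stable under intersection.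
-/

open Topology

theorem setIntegral_union_add_inter {α : Type*} [MeasurableSpace α] {μ : Measure α}
    {g : α → ℝ} (hg : Integrable g μ) (s : Set α) {t : Set α} (ht : MeasurableSet t) :
    (∫ x in s ∪ t, g x ∂μ) + ∫ x in s ∩ t, g x ∂μ = (∫ x in s, g x ∂μ) + ∫ x in t, g x ∂μ := by
  rw [← integral_add_measure hg.restrict hg.restrict,
    ← integral_add_measure hg.restrict hg.restrict, Measure.restrict_union_add_inter s ht]

theorem abs_setIntegral_biUnion_le {α : Type*} [MeasurableSpace α] {μ : Measure α}
    {g : α → ℝ} (hg : Integrable g μ) {P : Set α → Prop} (hmeas : ∀ s, P s → MeasurableSet s)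
    (hinter : ∀ s t, P s → P t → P (s ∩ t)) {B : ℝ} (hB0 : 0 ≤ B)
    (hB : ∀ s, P s → |∫ x in s, g x ∂μ| ≤ B) (𝒮 : Finset (Set α)) (h𝒮 : ∀ s ∈ 𝒮, P s) :
    |∫ x in ⋃ s ∈ 𝒮, s, g x ∂μ| ≤ (2 ^ 𝒮.card - 1) * B := by
  classical
  induction hn : 𝒮.card using Nat.strong_induction_on generalizing 𝒮 with
  | _ n ih =>
  rcases 𝒮.eq_empty_or_nonempty with rfl | ⟨R, hR⟩
  · simp [← hn]
  subst hn
  set 𝒮' := 𝒮.erase R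
  set 𝒯 := 𝒮'.image (R ∩ ·)
  have hcard : 𝒮.card = 𝒮'.card + 1 := (Finset.card_erase_add_one hR).symm
  have hcard𝒯 : 𝒯.card ≤ 𝒮'.card := Finset.card_image_le
  have hP' : ∀ s ∈ 𝒮', P s := fun s hs => h𝒮 s (Finset.mem_of_mem_erase hs)
  have hunion : (⋃ s ∈ 𝒮, s) = R ∪ ⋃ s ∈ 𝒮', s := by
    conv_lhs => rw [← Finset.insert_erase hR, Finset.set_biUnion_insert]
  have hinter_eq : R ∩ (⋃ s ∈ 𝒮', s) = ⋃ t ∈ 𝒯, t := by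
    simp [𝒯, Set.inter_iUnion₂]
  have hsum := setIntegral_union_add_inter hg R (μ := μ)
    (Finset.measurableSet_biUnion 𝒮' fun s hs => hmeas s (hP' s hs))
  rw [hinter_eq] at hsum
  have hIR := hB R (h𝒮 R hR)
  have hI' := ih _ (by omega) 𝒮' hP' rfl
  have hI𝒯 := ih _ (by omega) 𝒯
    (by simpa [𝒯] using fun s hs => hinter R s (h𝒮 R hR) (hP' s hs)) rfl
  have h𝒯le : ((2 : ℝ) ^ 𝒯.card - 1) * B ≤ (2 ^ 𝒮'.card - 1) * B :=
    mul_le_mul_of_nonneg_right (sub_le_sub_right (pow_le_pow_right₀ one_le_two hcard𝒯) 1) hB0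
  rw [hunion, hcard, pow_succ, eq_sub_of_add_eq hsum]
  calc |(∫ x in R, g x ∂μ) + (∫ x in ⋃ s ∈ 𝒮', s, g x ∂μ) - ∫ x in ⋃ t ∈ 𝒯, t, g x ∂μ|
      ≤ |∫ x in R, g x ∂μ| + |∫ x in ⋃ s ∈ 𝒮', s, g x ∂μ| + |∫ x in ⋃ t ∈ 𝒯, t, g x ∂μ| :=
        (abs_sub _ _).trans (by gcongr; exact abs_add_le _ _)
    _ ≤ (2 ^ 𝒮'.card * 2 - 1) * B := by linarith

lemma abs_intervalIntegral_le_of_abs_le_one {f : ℝ → ℝ} (hf : ∀ t, |f t| ≤ 1) {a b : ℝ}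
    (hab : a ≤ b) : |∫ t in a..b, f t| ≤ b - a := by
  simpa only [Real.norm_eq_abs, one_mul, abs_of_nonneg (sub_nonneg.2 hab)] using
    intervalIntegral.norm_integral_le_of_norm_le_const (a := a) (b := b) (C := 1)
      fun t _ => (Real.norm_eq_abs _).trans_le (hf t)

noncomputable section

def prodEquivE2 : (ℝ × ℝ) ≃L[ℝ] E2 :=
  (ContinuousLinearEquiv.finTwoArrow ℝ ℝ).symm.trans (EuclideanSpace.equiv (Fin 2) ℝ).symm

@[simp] lemma prodEquivE2_apply_zero (p : ℝ × ℝ) : prodEquivE2 p 0 = p.1 := rfl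

@[simp] lemma prodEquivE2_apply_one (p : ℝ × ℝ) : prodEquivE2 p 1 = p.2 := rfl

lemma prodEquivE2_one_zero : prodEquivE2 (1, 0) = EuclideanSpace.single 0 1 := by
  ext i; fin_cases i <;> simp [prodEquivE2]

lemma prodEquivE2_zero_one : prodEquivE2 (0, 1) = EuclideanSpace.single 1 1 := by
  ext i; fin_cases i <;> simp [prodEquivE2]

lemma measurePreserving_prodEquivE2 : MeasurePreserving prodEquivE2 :=
  (PiLp.volume_preserving_toLp (Fin 2)).comp (volume_preserving_finTwoArrow ℝ).symm

lemma prodEquivE2_preimage_cellSet (a b c d : ℝ) :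
    prodEquivE2 ⁻¹' cellSet a b c d = Icc (a, c) (b, d) := by
  rw [← Icc_prod_Icc]; rfl

lemma prodEquivE2_image_Icc (a b c d : ℝ) :
    prodEquivE2 '' Icc (a, c) (b, d) = cellSet a b c d := by
  rw [← prodEquivE2_preimage_cellSet, image_preimage_eq _ prodEquivE2.surjective]

lemma isCompact_cellSet (a b c d : ℝ) : IsCompact (cellSet a b c d) := by
  rw [← prodEquivE2_image_Icc]
  exact isCompact_Icc.image prodEquivE2.continuous

lemma measurableSet_cellSet (a b c d : ℝ) : MeasurableSet (cellSet a b c d) :=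
  (isCompact_cellSet a b c d).isClosed.measurableSet

lemma volume_cellSet (a b c d : ℝ) :
    volume (cellSet a b c d) = ENNReal.ofReal (b - a) * ENNReal.ofReal (d - c) := by
  rw [← measurePreserving_prodEquivE2.measure_preimage
    (measurableSet_cellSet a b c d).nullMeasurableSet, prodEquivE2_preimage_cellSet,
    ← Icc_prod_Icc, Measure.volume_eq_prod, Measure.prod_prod, Real.volume_Icc, Real.volume_Icc]

lemma volume_cellSet_ne_top (a b c d : ℝ) : volume (cellSet a b c d) ≠ ⊤ := by
  simp [volume_cellSet, ENNReal.mul_eq_top]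

lemma setIntegral_cellSet (g : E2 → ℝ) (a b c d : ℝ) :
    ∫ x in cellSet a b c d, g x = ∫ p in Icc (a, c) (b, d), g (prodEquivE2 p) := by
  rw [← prodEquivE2_preimage_cellSet, measurePreserving_prodEquivE2.setIntegral_preimage_emb
    prodEquivE2.toHomeomorph.measurableEmbedding]

lemma cellSet_inter_cellSet (a b c d a' b' c' d' : ℝ) :
    cellSet a b c d ∩ cellSet a' b' c' d' =
      cellSet (max a a') (min b b') (max c c') (min d d') := by
  ext x
  simp only [cellSet, mem_inter_iff, mem_ofPred_eq, ← Icc_inter_Icc]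
  tauto

lemma closedBall_zero_subset_cellSet (r : ℝ) :
    Metric.closedBall (0 : E2) r ⊆ cellSet (-r) r (-r) r := fun x hx =>
  have hx : ‖x‖ ≤ r := mem_closedBall_zero_iff.1 hx
  ⟨abs_le.1 ((PiLp.norm_apply_le x 0).trans hx), abs_le.1 ((PiLp.norm_apply_le x 1).trans hx)⟩

lemma hasCompactSupport_mul_coord {f k : ℝ → ℝ} (hf : HasCompactSupport f)
    (hk : HasCompactSupport k) : HasCompactSupport fun x : E2 => f (x 0) * k (x 1) := by
  refine HasCompactSupport.intro ((hf.isCompact.prod hk.isCompact).image prodEquivE2.continuous)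
    fun x hx => ?_
  by_contra h
  refine hx ⟨(x 0, x 1), ⟨subset_tsupport _ (left_ne_zero_of_mul h),
    subset_tsupport _ (right_ne_zero_of_mul h)⟩, ?_⟩
  ext i; fin_cases i <;> rfl

lemma continuous_divg {η : E2 → E2} (hη : ContDiff ℝ 1 η) : Continuous (divg η) := by
  have h := hη.continuous_fderiv one_ne_zero
  unfold divg
  fun_prop

lemma integrable_divg {η : E2 → E2} (hη : ContDiff ℝ 1 η) (hs : HasCompactSupport η) :
    Integrable (divg η) :=
  (continuous_divg hη).integrable_of_hasCompactSupport <|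
    hs.fderiv (𝕜 := ℝ) |>.comp_left (g := fun L : E2 →L[ℝ] E2 =>
      L (EuclideanSpace.single 0 1) 0 + L (EuclideanSpace.single 1 1) 1) (by simp)

lemma divg_congr {η η' : E2 → E2} {x : E2} (h : η =ᶠ[𝓝 x] η') : divg η x = divg η' x := by
  simp only [divg, h.fderiv_eq]

lemma divg_affine (p q m₁ m₂ : ℝ) (x : E2) :
    divg (fun y => (p * (y 0 - m₁)) • EuclideanSpace.single 0 1 +
      (q * (y 1 - m₂)) • EuclideanSpace.single 1 1) x = p + q := by
  have h : ∀ (i : Fin 2) (r m : ℝ),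
      HasFDerivAt (fun y : E2 => (r * (y i - m)) • EuclideanSpace.single i (1 : ℝ))
        ((r • EuclideanSpace.proj (𝕜 := ℝ) i).smulRight (EuclideanSpace.single i 1)) x :=
    fun i r m =>
      (((EuclideanSpace.proj (𝕜 := ℝ) i).hasFDerivAt.sub_const m).const_mul r).smul_const _
  rw [divg, ((h 0 p m₁).fun_add (h 1 q m₂)).fderiv]
  simp

theorem integral_divg_cellSet {η : E2 → E2} (hη : ContDiff ℝ 1 η) {a b c d : ℝ}
    (hab : a ≤ b) (hcd : c ≤ d) :
    ∫ x in cellSet a b c d, divg η x =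
      (((∫ t in a..b, η (prodEquivE2 (t, d)) 1) - ∫ t in a..b, η (prodEquivE2 (t, c)) 1) +
        ∫ s in c..d, η (prodEquivE2 (b, s)) 0) - ∫ s in c..d, η (prodEquivE2 (a, s)) 0 := by
  set T := prodEquivE2
  set L : ℝ × ℝ → (ℝ × ℝ) →L[ℝ] E2 := fun p => (fderiv ℝ η (T p)).comp (T : (ℝ × ℝ) →L[ℝ] E2)
  have hT : ∀ p, HasFDerivAt (fun q => η (T q)) (L p) p :=
    fun p => ((hη.differentiable one_ne_zero _).hasFDerivAt).comp p T.hasFDerivAt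
  have hdiv : ∀ p, (EuclideanSpace.proj 0).comp (L p) (1, 0) +
      (EuclideanSpace.proj 1).comp (L p) (0, 1) = divg η (T p) := fun p => by
    simp [L, divg, T, prodEquivE2_one_zero, prodEquivE2_zero_one]
  have hcont : Continuous fun q => η (T q) := hη.continuous.comp T.continuous
  have hGauss := integral_divergence_prod_Icc_of_hasFDerivAt_off_countable_of_le
    (fun q => η (T q) 0) (fun q => η (T q) 1) (fun p => (EuclideanSpace.proj 0).comp (L p))
    (fun p => (EuclideanSpace.proj 1).comp (L p)) (a, c) (b, d) ⟨hab, hcd⟩ ∅ countable_empty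
    ((PiLp.continuous_apply 2 _ 0).comp hcont).continuousOn
    ((PiLp.continuous_apply 2 _ 1).comp hcont).continuousOn
    (fun p _ => (EuclideanSpace.proj (𝕜 := ℝ) (0 : Fin 2)).hasFDerivAt.comp p (hT p))
    (fun p _ => (EuclideanSpace.proj (𝕜 := ℝ) (1 : Fin 2)).hasFDerivAt.comp p (hT p))
    (by simp_rw [hdiv]
        exact ((continuous_divg hη).comp T.continuous).continuousOn.integrableOn_compact
          isCompact_Icc)
  simp_rw [hdiv] at hGauss
  rw [setIntegral_cellSet, hGauss]

theorem abs_setIntegral_divg_cellSet_le {η : E2 → E2} (hη : ContDiff ℝ 1 η)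
    (hb : ∀ x, max |η x 0| |η x 1| ≤ 1) {a b c d : ℝ} (hab : a ≤ b) (hcd : c ≤ d) :
    |∫ x in cellSet a b c d, divg η x| ≤ 2 * (b - a) + 2 * (d - c) := by
  have h₀ : ∀ x, |η x 0| ≤ 1 := fun x => (le_max_left _ _).trans (hb x)
  have h₁ : ∀ x, |η x 1| ≤ 1 := fun x => (le_max_right _ _).trans (hb x)
  obtain ⟨htop, htop'⟩ := abs_le.1 <|
    abs_intervalIntegral_le_of_abs_le_one (fun t => h₁ (prodEquivE2 (t, d))) hab
  obtain ⟨hbot, hbot'⟩ := abs_le.1 <|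
    abs_intervalIntegral_le_of_abs_le_one (fun t => h₁ (prodEquivE2 (t, c))) hab
  obtain ⟨hright, hright'⟩ := abs_le.1 <|
    abs_intervalIntegral_le_of_abs_le_one (fun s => h₀ (prodEquivE2 (b, s))) hcd
  obtain ⟨hleft, hleft'⟩ := abs_le.1 <|
    abs_intervalIntegral_le_of_abs_le_one (fun s => h₀ (prodEquivE2 (a, s))) hcd
  rw [integral_divg_cellSet hη hab hcd]
  exact abs_le.2 ⟨by linarith, by linarith⟩

theorem abs_setIntegral_divg_le_of_cellSet_subset {η : E2 → E2} (hη : ContDiff ℝ 1 η)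
    (hb : ∀ x, max |η x 0| |η x 1| ≤ 1) {a₁ b₁ a₂ b₂ a b c d : ℝ} (h₁ : a₁ ≤ b₁) (h₂ : a₂ ≤ b₂)
    (hsub : cellSet a b c d ⊆ cellSet a₁ b₁ a₂ b₂) :
    |∫ x in cellSet a b c d, divg η x| ≤ 2 * (b₁ - a₁) + 2 * (b₂ - a₂) := by
  by_cases h : a ≤ b ∧ c ≤ d
  · obtain ⟨⟨ha, -⟩, hc, -⟩ := hsub (show prodEquivE2 (a, c) ∈ cellSet a b c d from
      ⟨⟨le_rfl, h.1⟩, le_rfl, h.2⟩)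
    obtain ⟨⟨-, hb'⟩, -, hd⟩ := hsub (show prodEquivE2 (b, d) ∈ cellSet a b c d from
      ⟨⟨h.1, le_rfl⟩, h.2, le_rfl⟩)
    simp only [prodEquivE2_apply_zero, prodEquivE2_apply_one] at ha hc hb' hd
    linarith [abs_setIntegral_divg_cellSet_le hη hb h.1 h.2]
  · have : cellSet a b c d = ∅ := eq_empty_of_forall_notMem fun x ⟨⟨h₀, h₀'⟩, h₁', h₁''⟩ =>
      h ⟨h₀.trans h₀', h₁'.trans h₁''⟩
    simp only [this, Measure.restrict_empty, integral_zero_measure, abs_zero]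
    linarith

lemma exists_contDiff_eventuallyEq_linear {m r p : ℝ} (hr : 0 ≤ r) (hp : 0 < p)
    (hpr : p * r < 1) :
    ∃ f : ℝ → ℝ, ContDiff ℝ 1 f ∧ HasCompactSupport f ∧ (∀ t, |f t| ≤ 1) ∧
      ∀ t, |t - m| ≤ r → f =ᶠ[𝓝 t] fun s => p * (s - m) := by
  have hr' : r < 1 / p := by rwa [lt_div_iff₀ hp, mul_comm]
  let ψ : ContDiffBump m := ⟨(r + 1 / p) / 2, 1 / p, by positivity, by linarith⟩
  refine ⟨fun t => p * (t - m) * ψ t,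
    (contDiff_const.mul (contDiff_id.sub contDiff_const)).mul ψ.contDiff,
    ψ.hasCompactSupport.mul_left, fun t => ?_, fun t ht => ?_⟩
  · rcases le_or_gt (1 / p) |t - m| with h | h
    · simp [ψ.zero_of_le_dist (by rwa [Real.dist_eq])]
    · rw [abs_mul, abs_mul, abs_of_pos hp, abs_of_nonneg ψ.nonneg]
      calc p * |t - m| * ψ t ≤ p * (1 / p) * 1 :=
          mul_le_mul (by gcongr) ψ.le_one ψ.nonneg (by positivity)
        _ = 1 := by field_simp
  · filter_upwards [ψ.eventuallyEq_one_of_mem_ball (by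
      rw [Metric.mem_ball, Real.dist_eq]; show |t - m| < (r + 1 / p) / 2; linarith)] with s hs
    simp [hs]

theorem exists_calibration {u v w z p q : ℝ} (huv : u ≤ v) (hwz : w ≤ z) (hp : 0 < p)
    (hq : 0 < q) (hpv : p * (v - u) < 2) (hqz : q * (z - w) < 2) :
    ∃ η : E2 → E2, ContDiff ℝ 1 η ∧ HasCompactSupport η ∧ (∀ x, max |η x 0| |η x 1| ≤ 1) ∧
      ∀ x ∈ cellSet u v w z, divg η x = p + q := by
  set m₁ := (u + v) / 2 with hm₁
  set m₂ := (w + z) / 2 with hm₂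
  obtain ⟨f, hf, hfs, hfb, hfeq⟩ := exists_contDiff_eventuallyEq_linear (m := m₁)
    (r := (v - u) / 2) (by linarith) hp (by linarith)
  obtain ⟨g, hg, hgs, hgb, hgeq⟩ := exists_contDiff_eventuallyEq_linear (m := m₂)
    (r := (z - w) / 2) (by linarith) hq (by linarith)
  let χ₁ : ContDiffBump m₁ := ⟨(v - u) / 2 + 1, (v - u) / 2 + 2, by linarith, by linarith⟩
  let χ₂ : ContDiffBump m₂ := ⟨(z - w) / 2 + 1, (z - w) / 2 + 2, by linarith, by linarith⟩
  have hχ : ∀ {m : ℝ} (χ : ContDiffBump m) (t : ℝ), |χ t| ≤ 1 := fun χ t => by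
    rw [abs_of_nonneg χ.nonneg]; exact χ.le_one
  have hc₀ : ContDiff ℝ 1 fun x : E2 => x 0 := contDiff_piLp_apply 2
  have hc₁ : ContDiff ℝ 1 fun x : E2 => x 1 := contDiff_piLp_apply 2
  refine ⟨fun x => (f (x 0) * χ₂ (x 1)) • EuclideanSpace.single 0 1 +
    (χ₁ (x 0) * g (x 1)) • EuclideanSpace.single 1 1, ?_, ?_, fun x => ?_, fun x hx => ?_⟩
  · exact (((hf.comp hc₀).mul (χ₂.contDiff.comp hc₁)).smul contDiff_const).add
      (((χ₁.contDiff.comp hc₀).mul (hg.comp hc₁)).smul contDiff_const)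
  · exact (hasCompactSupport_mul_coord hfs χ₂.hasCompactSupport).smul_right.add
      (hasCompactSupport_mul_coord χ₁.hasCompactSupport hgs).smul_right
  · simp only [PiLp.add_apply, PiLp.smul_apply, PiLp.single_apply, smul_eq_mul, Fin.isValue,
      zero_ne_one, one_ne_zero, ↓reduceIte, mul_zero, add_zero, zero_add, mul_one, max_le_iff,
      abs_mul]
    exact ⟨mul_le_one₀ (hfb _) (abs_nonneg _) (hχ _ _),
      mul_le_one₀ (hχ _ _) (abs_nonneg _) (hgb _)⟩
  · obtain ⟨⟨hu, hv⟩, hw, hz⟩ := hx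
    have h₀ : |x 0 - m₁| ≤ (v - u) / 2 := abs_le.2 ⟨by linarith, by linarith⟩
    have h₁ : |x 1 - m₂| ≤ (z - w) / 2 := abs_le.2 ⟨by linarith, by linarith⟩
    have hd₀ : x 0 ∈ Metric.ball m₁ χ₁.rIn := by
      rw [Metric.mem_ball, Real.dist_eq]; show _ < (v - u) / 2 + 1; linarith
    have hd₁ : x 1 ∈ Metric.ball m₂ χ₂.rIn := by
      rw [Metric.mem_ball, Real.dist_eq]; show _ < (z - w) / 2 + 1; linarith
    have ht₀ : Tendsto (fun y : E2 => y 0) (𝓝 x) (𝓝 (x 0)) :=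
      (PiLp.continuous_apply 2 _ 0).tendsto x
    have ht₁ : Tendsto (fun y : E2 => y 1) (𝓝 x) (𝓝 (x 1)) :=
      (PiLp.continuous_apply 2 _ 1).tendsto x
    rw [divg_congr (η' := fun y => (p * (y 0 - m₁)) • EuclideanSpace.single 0 1 +
      (q * (y 1 - m₂)) • EuclideanSpace.single 1 1), divg_affine]
    filter_upwards [ht₀.eventually (hfeq _ h₀), ht₁.eventually (hgeq _ h₁),
      ht₀.eventually (χ₁.eventuallyEq_one_of_mem_ball hd₀),
      ht₁.eventually (χ₂.eventuallyEq_one_of_mem_ball hd₁)] with y hfy hgy hχ₁y hχ₂y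
    simp [hfy, hgy, hχ₁y, hχ₂y]

lemma setIntegral_indicator_one_mul {E : Set E2} (hE : MeasurableSet E) (g : E2 → ℝ) :
    ∫ x in univ, E.indicator (fun _ => (1 : ℝ)) x * g x = ∫ x in E, g x := by
  rw [setIntegral_univ, ← integral_indicator hE]
  congr with x
  by_cases hx : x ∈ E <;> simp [hx]

theorem P1'_le_ofReal {E : Set E2} (hE : MeasurableSet E) {M : ℝ}
    (h : ∀ η : E2 → E2, ContDiff ℝ 1 η → HasCompactSupport η →
      (∀ x, max |η x 0| |η x 1| ≤ 1) → ∫ x in E, divg η x ≤ M) :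
    P1' E ≤ ENNReal.ofReal M :=
  iSup_le fun ⟨η, hη, hs, _, hb⟩ => ENNReal.ofReal_le_ofReal <| by
    rw [setIntegral_indicator_one_mul hE]; exact h η hη hs hb

theorem ofReal_setIntegral_divg_le_P1' {E : Set E2} (hE : MeasurableSet E) {η : E2 → E2}
    (hη : ContDiff ℝ 1 η) (hs : HasCompactSupport η) (hb : ∀ x, max |η x 0| |η x 1| ≤ 1) :
    ENNReal.ofReal (∫ x in E, divg η x) ≤ P1' E := by
  rw [← setIntegral_indicator_one_mul hE]
  exact le_iSup (fun η : {η : E2 → E2 // ContDiff ℝ 1 η ∧ HasCompactSupport η ∧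
    tsupport η ⊆ univ ∧ ∀ x, max |η x 0| |η x 1| ≤ 1} =>
      ENNReal.ofReal (∫ x in univ, E.indicator (fun _ => (1 : ℝ)) x * divg η.1 x))
    ⟨η, hη, hs, subset_univ _, hb⟩

theorem P1'_cellSet_le {a b c d : ℝ} (hab : a ≤ b) (hcd : c ≤ d) :
    P1' (cellSet a b c d) ≤ ENNReal.ofReal (2 * (b - a) + 2 * (d - c)) :=
  P1'_le_ofReal (measurableSet_cellSet a b c d) fun _ hη _ hb =>
    (le_abs_self _).trans (abs_setIntegral_divg_cellSet_le hη hb hab hcd)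

theorem P1'_biUnion_cellSet_le {a₁ b₁ a₂ b₂ : ℝ} (h₁ : a₁ ≤ b₁) (h₂ : a₂ ≤ b₂)
    (𝒮 : Finset (Set E2))
    (h𝒮 : ∀ R ∈ 𝒮, (∃ a b c d, R = cellSet a b c d) ∧ R ⊆ cellSet a₁ b₁ a₂ b₂) :
    P1' (⋃ R ∈ 𝒮, R) ≤
      ENNReal.ofReal ((2 ^ 𝒮.card - 1) * (2 * (b₁ - a₁) + 2 * (b₂ - a₂))) := by
  have hmeas : ∀ R ∈ 𝒮, MeasurableSet R := fun R hR => by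
    obtain ⟨⟨a, b, c, d, rfl⟩, -⟩ := h𝒮 R hR
    exact measurableSet_cellSet a b c d
  refine P1'_le_ofReal (Finset.measurableSet_biUnion 𝒮 hmeas) fun η hη hs hb =>
    (le_abs_self _).trans <| abs_setIntegral_biUnion_le (integrable_divg hη hs)
      (P := fun R => (∃ a b c d, R = cellSet a b c d) ∧ R ⊆ cellSet a₁ b₁ a₂ b₂)
      ?_ ?_ (by linarith) ?_ 𝒮 h𝒮
  · rintro _ ⟨⟨a, b, c, d, rfl⟩, -⟩
    exact measurableSet_cellSet a b c d
  · rintro _ _ ⟨⟨a, b, c, d, rfl⟩, hR⟩ ⟨⟨a', b', c', d', rfl⟩, -⟩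
    exact ⟨⟨_, _, _, _, cellSet_inter_cellSet a b c d a' b' c' d'⟩, inter_subset_left.trans hR⟩
  · rintro _ ⟨⟨a, b, c, d, rfl⟩, hR⟩
    exact abs_setIntegral_divg_le_of_cellSet_subset hη hb h₁ h₂ hR

theorem ofReal_mul_volume_le_P1' {a₁ b₁ a₂ b₂ : ℝ} (h₁ : a₁ < b₁) (h₂ : a₂ < b₂) {E : Set E2}
    (hE : MeasurableSet E) (hEsub : E ⊆ cellSet a₁ b₁ a₂ b₂) :
    ENNReal.ofReal (2 / (b₁ - a₁) + 2 / (b₂ - a₂)) * volume E ≤ P1' E := by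
  have hw : 0 < b₁ - a₁ := sub_pos.2 h₁
  have hh : 0 < b₂ - a₂ := sub_pos.2 h₂
  have hEfin : volume E ≠ ⊤ :=
    ne_top_of_le_ne_top (volume_cellSet_ne_top _ _ _ _) (measure_mono hEsub)
  -- The factor `s < 1` is needed: a C¹ field with divergence exactly `κ` on `R₀` leaves
  -- `[-1, 1]²` just outside `R₀`.
  refine ENNReal.le_of_forall_lt_one_mul_le fun s hs => ?_
  rcases eq_or_ne s 0 with rfl | hs0
  · simp
  have hsfin : s ≠ ⊤ := (hs.trans ENNReal.one_lt_top).ne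
  set t := s.toReal
  have ht0 : 0 < t := ENNReal.toReal_pos hs0 hsfin
  have ht1 : t < 1 := by simpa using ENNReal.toReal_strict_mono ENNReal.one_ne_top hs
  obtain ⟨η, hη, hs, hb, hdiv⟩ := exists_calibration (p := t * (2 / (b₁ - a₁)))
    (q := t * (2 / (b₂ - a₂))) h₁.le h₂.le (by positivity) (by positivity)
    (by field_simp; linarith) (by field_simp; linarith)
  have hint : ∫ x in E, divg η x = t * ((2 / (b₁ - a₁) + 2 / (b₂ - a₂)) * volume.real E) := by
    rw [setIntegral_congr_fun hE fun x hx => hdiv x (hEsub hx), setIntegral_const, smul_eq_mul]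
    ring
  calc s * (ENNReal.ofReal (2 / (b₁ - a₁) + 2 / (b₂ - a₂)) * volume E)
      = ENNReal.ofReal (∫ x in E, divg η x) := by
        rw [hint, ENNReal.ofReal_mul ht0.le, ENNReal.ofReal_mul (by positivity),
          ENNReal.ofReal_toReal hsfin, measureReal_def, ENNReal.ofReal_toReal hEfin]
    _ ≤ P1' E := ofReal_setIntegral_divg_le_P1' hE hη hs hb

namespace IsRectPolygon

variable {F : Set E2}

theorem isCompact (hF : IsRectPolygon F) : IsCompact F := by
  obtain ⟨𝒮, -, h𝒮, rfl⟩ := hF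
  refine 𝒮.isCompact_biUnion fun R hR => ?_
  obtain ⟨a, b, c, d, -, -, rfl⟩ := h𝒮 R hR
  exact isCompact_cellSet a b c d

theorem measurableSet (hF : IsRectPolygon F) : MeasurableSet F :=
  hF.isCompact.isClosed.measurableSet

theorem volume_pos (hF : IsRectPolygon F) : 0 < volume F := by
  obtain ⟨𝒮, ⟨R, hR⟩, h𝒮, rfl⟩ := hF
  obtain ⟨a, b, c, d, hab, hcd, rfl⟩ := h𝒮 R hR
  refine lt_of_lt_of_le ?_ (measure_mono (subset_biUnion_of_mem (u := id) hR))
  simp [volume_cellSet, hab, hcd]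

theorem P1'_ne_top (hF : IsRectPolygon F) : P1' F ≠ ⊤ := by
  obtain ⟨r, hr, hFr⟩ := hF.isCompact.isBounded.subset_closedBall_lt 0 0
  obtain ⟨𝒮, -, h𝒮, rfl⟩ := hF
  refine ne_top_of_le_ne_top ENNReal.ofReal_ne_top <|
    P1'_biUnion_cellSet_le (a₁ := -r) (b₁ := r) (a₂ := -r) (b₂ := r) (by linarith)
      (by linarith) 𝒮 fun R hR => ⟨?_, ?_⟩
  · obtain ⟨a, b, c, d, -, -, rfl⟩ := h𝒮 R hR
    exact ⟨a, b, c, d, rfl⟩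
  · exact (subset_biUnion_of_mem (u := id) hR).trans
      (hFr.trans (closedBall_zero_subset_cellSet r))

end IsRectPolygon

end

/-- The rectangle minimizes the ratio of ℓ¹-perimeter to area among
rectilinear polygons contained in it. For the rectangle `R₀ = [a₁,b₁] × [a₂,b₂]`,
`P₁(R₀)/L²(R₀) = 2((b₁−a₁)+(b₂−a₂))/((b₁−a₁)(b₂−a₂))`, and every rectilinear
polygon `F ⊆ R₀` satisfies `P₁(F)/L²(F) ≥ P₁(R₀)/L²(R₀)`. -/
theorem stmt15 (a₁ b₁ a₂ b₂ : ℝ) (h₁ : a₁ < b₁) (h₂ : a₂ < b₂)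
    (F : Set E2) (hF : IsRectPolygon F) (hFsub : F ⊆ cellSet a₁ b₁ a₂ b₂) :
    (P1' (cellSet a₁ b₁ a₂ b₂)).toReal / (volume (cellSet a₁ b₁ a₂ b₂)).toReal
      = 2 * ((b₁ - a₁) + (b₂ - a₂)) / ((b₁ - a₁) * (b₂ - a₂)) ∧
    (P1' (cellSet a₁ b₁ a₂ b₂)).toReal / (volume (cellSet a₁ b₁ a₂ b₂)).toReal
      ≤ (P1' F).toReal / (volume F).toReal := by
  have hw : 0 < b₁ - a₁ := sub_pos.2 h₁
  have hh : 0 < b₂ - a₂ := sub_pos.2 h₂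
  have hvolR₀ : volume (cellSet a₁ b₁ a₂ b₂) = ENNReal.ofReal ((b₁ - a₁) * (b₂ - a₂)) := by
    rw [volume_cellSet, ENNReal.ofReal_mul hw.le]
  have hPR₀ : P1' (cellSet a₁ b₁ a₂ b₂) = ENNReal.ofReal (2 * ((b₁ - a₁) + (b₂ - a₂))) := by
    refine le_antisymm ((P1'_cellSet_le h₁.le h₂.le).trans_eq (by ring_nf)) ?_
    refine le_of_eq_of_le ?_
      (ofReal_mul_volume_le_P1' h₁ h₂ (measurableSet_cellSet _ _ _ _) subset_rfl)
    rw [hvolR₀, ← ENNReal.ofReal_mul (by positivity)]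
    congr 1
    field_simp
    ring
  have hvolF : 0 < (volume F).toReal := ENNReal.toReal_pos hF.volume_pos.ne'
    (ne_top_of_le_ne_top (volume_cellSet_ne_top _ _ _ _) (measure_mono hFsub))
  have hPF := ENNReal.toReal_mono hF.P1'_ne_top
    (ofReal_mul_volume_le_P1' h₁ h₂ hF.measurableSet hFsub)
  rw [ENNReal.toReal_mul, ENNReal.toReal_ofReal (by positivity)] at hPF
  rw [hPR₀, hvolR₀, ENNReal.toReal_ofReal (by positivity), ENNReal.toReal_ofReal (by positivity)]
  refine ⟨rfl, (le_div_iff₀ hvolF).2 (le_of_eq_of_le ?_ hPF)⟩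
  field_simp
  ring
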